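/- arXiv:2509.26209 — 2 statements merged into one kernel-verified Lean document; each statement's English description precedes it below -/
import Mathlib

section
/- Let S and A be finite nonempty types, let T : S → A → S → ℝ be a transition kernel (T s a s' ≥ 0 for all s, a, s' and ∑_{s'} T s a s' = 1 for all s, a), let R : S → A → S → ℝ be a reward function, let γ ∈ [0,1) be a discount factor, let d : S → ℝ be a potential function, and let λ ∈ ℝ. Define the shaped reward R'(s,a,s') = R(s,a,s') + λ·(γ·d(s') − d(s)). Suppose Q : S → A → ℝ satisfies the Bellman optimality equation for reward R, i.e. Q s a = ∑_{s'} T s a s' · (R s a s' + γ · max_{a'} Q s' a') for all s, a, and Q' : S → A → ℝ satisfies the Bellman optimality equation for reward R'. Then for every state s, the set of actions maximizing a ↦ Q'(s,a) equals the set of actions maximizing a ↦ Q(s,a); consequently every greedy (optimal) policy for the shaped MDP is optimal for the original MDP and vice versa. -/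
/-- Maximum of a real-valued function over a finite nonempty type,
taken as `Finset.max'` over `Finset.univ`. -/
noncomputable def fmax {A : Type*} [Fintype A] [Nonempty A] (f : A → ℝ) : ℝ :=
  (Finset.univ.image f).max' (Finset.univ_nonempty.image f)

lemma le_fmax {A : Type*} [Fintype A] [Nonempty A] (f : A → ℝ) (a : A) :
    f a ≤ fmax f :=
  Finset.le_max' _ _ (Finset.mem_image_of_mem f (Finset.mem_univ a))

lemma fmax_le {A : Type*} [Fintype A] [Nonempty A] (f : A → ℝ) (x : ℝ)
    (h : ∀ a, f a ≤ x) : fmax f ≤ x :=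
  Finset.max'_le _ _ _ fun y hy => by
    obtain ⟨a, -, rfl⟩ := Finset.mem_image.mp hy; exact h a

lemma fmax_add_const {A : Type*} [Fintype A] [Nonempty A] (f : A → ℝ) (c : ℝ) :
    fmax (fun a => f a + c) = fmax f + c := by
  apply le_antisymm
  · exact fmax_le _ _ fun a => by
      have := le_fmax f a; linarith
  · have : fmax f ≤ fmax (fun a => f a + c) - c :=
      fmax_le _ _ fun a => by have := le_fmax (fun a => f a + c) a; linarith
    linarith

lemma abs_fmax_sub_le {A : Type*} [Fintype A] [Nonempty A] (f g : A → ℝ) (M : ℝ)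
    (h : ∀ a, |f a - g a| ≤ M) : |fmax f - fmax g| ≤ M := by
  rw [abs_le]
  constructor
  · have : fmax g ≤ fmax f + M :=
      fmax_le _ _ fun a => by
        have h1 := (abs_le.mp (h a)).1
        have := le_fmax f a; linarith
    linarith
  · have : fmax f ≤ fmax g + M :=
      fmax_le _ _ fun a => by
        have h1 := (abs_le.mp (h a)).2
        have := le_fmax g a; linarith
    linarith

/-- Potential-based reward shaping preserves the argmax sets of the optimal
Q-functions: every greedy (optimal) policy for the shaped MDP is optimal for
the original MDP and vice versa. -/
theorem shaped_argmax_eq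
    {S A : Type*} [Fintype S] [Nonempty S] [Fintype A] [Nonempty A]
    (T : S → A → S → ℝ) (hT0 : ∀ s a s', 0 ≤ T s a s')
    (hT1 : ∀ s a, ∑ s', T s a s' = 1)
    (R : S → A → S → ℝ) (γ : ℝ) (hγ0 : 0 ≤ γ) (hγ1 : γ < 1)
    (d : S → ℝ) (lam : ℝ)
    (Q Q' : S → A → ℝ)
    (hQ : ∀ s a, Q s a =
      ∑ s', T s a s' * (R s a s' + γ * fmax (fun a' => Q s' a')))
    (hQ' : ∀ s a, Q' s a =
      ∑ s', T s a s' * ((R s a s' + lam * (γ * d s' - d s)) +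
        γ * fmax (fun a' => Q' s' a'))) :
    ∀ s : S, {a : A | ∀ b : A, Q' s b ≤ Q' s a} =
             {a : A | ∀ b : A, Q s b ≤ Q s a} := by
  -- D s a := Q' s a - Q s a + lam * d s ; show D ≡ 0 by a contraction argument
  set D : S → A → ℝ := fun s a => Q' s a - Q s a + lam * d s with hD
  have key : ∀ s a, D s a = γ * ∑ s',
      T s a s' * (lam * d s' + fmax (fun a' => Q' s' a') - fmax (fun a' => Q s' a')) := by
    intro s a
    have hlamd : lam * d s = ∑ s', T s a s' * (lam * d s) := by
      rw [← Finset.sum_mul, hT1, one_mul]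
    simp only [hD]
    rw [hQ' s a, hQ s a, Finset.mul_sum, hlamd, ← Finset.sum_sub_distrib,
      ← Finset.sum_add_distrib]
    exact Finset.sum_congr rfl fun s' _ => by ring
  -- take the point maximizing |D|
  obtain ⟨p, -, hp⟩ := Finset.exists_max_image (Finset.univ : Finset (S × A))
    (fun p => |D p.1 p.2|) ⟨Classical.arbitrary _, Finset.mem_univ _⟩
  set M : ℝ := |D p.1 p.2| with hM
  have hpM : ∀ s a, |D s a| ≤ M := fun s a => hp (s, a) (Finset.mem_univ _)
  have hM0 : 0 ≤ M := abs_nonneg _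
  -- each "error" term is bounded by M
  have herr : ∀ s' : S,
      |lam * d s' + fmax (fun a' => Q' s' a') - fmax (fun a' => Q s' a')| ≤ M := by
    intro s'
    have hshift : fmax (fun a' => Q' s' a' + lam * d s')
        = fmax (fun a' => Q' s' a') + lam * d s' := fmax_add_const _ _
    have := abs_fmax_sub_le (fun a' => Q' s' a' + lam * d s')
      (fun a' => Q s' a') M (fun a' => by
        have heq : Q' s' a' + lam * d s' - Q s' a' = D s' a' := by
          simp only [hD]; ring
        rw [heq]; exact hpM s' a')
    rw [hshift] at this
    have heq : fmax (fun a' => Q' s' a') + lam * d s' - fmax (fun a' => Q s' a')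
        = lam * d s' + fmax (fun a' => Q' s' a') - fmax (fun a' => Q s' a') := by ring
    rwa [heq] at this
  -- contraction: M ≤ γ * M
  have hstep : |D p.1 p.2| ≤ γ * M := by
    rw [key, abs_mul, abs_of_nonneg hγ0]
    apply mul_le_mul_of_nonneg_left _ hγ0
    calc |∑ s', T p.1 p.2 s' * (lam * d s' + fmax (fun a' => Q' s' a')
            - fmax (fun a' => Q s' a'))|
        ≤ ∑ s', |T p.1 p.2 s' * (lam * d s' + fmax (fun a' => Q' s' a')
            - fmax (fun a' => Q s' a'))| := Finset.abs_sum_le_sum_abs _ _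
      _ ≤ ∑ s', T p.1 p.2 s' * M := by
          apply Finset.sum_le_sum
          intro s' _
          rw [abs_mul, abs_of_nonneg (hT0 _ _ _)]
          exact mul_le_mul_of_nonneg_left (herr s') (hT0 _ _ _)
      _ = M := by rw [← Finset.sum_mul, hT1, one_mul]
  have hMle : M ≤ γ * M := by rw [hM]; exact hstep
  have hMzero : M = 0 := by nlinarith
  have hDzero : ∀ s a, Q' s a = Q s a - lam * d s := by
    intro s a
    have h1 := hpM s a
    rw [hMzero] at h1
    have : D s a = 0 := abs_nonpos_iff.mp h1
    simp only [hD] at this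
    linarith
  intro s
  ext a
  simp only [Set.mem_setOf_eq]
  constructor <;> intro h b <;> have hb := h b <;>
    rw [hDzero s b, hDzero s a] at * <;> linarith
end

section
/- Let S and A be finite nonempty types, T : S → A → S → ℝ a transition kernel (T s a s' ≥ 0 and ∑_{s'} T s a s' = 1 for all s, a), R : S → A → S → ℝ a reward function, γ ∈ ℝ a discount factor, d : S → ℝ a potential function, and λ ∈ ℝ. If Q : S → A → ℝ satisfies the Bellman optimality equation for reward R, then the function Q̂ defined by Q̂ s a = Q s a − λ · d s satisfies the Bellman optimality equation for the shaped reward R'(s,a,s') = R(s,a,s') + λ·(γ·d(s') − d(s)); that is, for all s, a: Q̂ s a = ∑_{s'} T s a s' · (R'(s,a,s') + γ · max_{a'} Q̂ s' a'). -/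
lemma fmax_le_iff {A : Type*} [Fintype A] [Nonempty A] (f : A → ℝ) (c : ℝ) :
    fmax f ≤ c ↔ ∀ a, f a ≤ c := by
  simp [fmax, Finset.max'_le_iff]

lemma exists_fmax {A : Type*} [Fintype A] [Nonempty A] (f : A → ℝ) :
    ∃ a, fmax f = f a := by
  obtain ⟨a, -, ha⟩ := Finset.mem_image.mp
    (Finset.max'_mem (Finset.univ.image f) (Finset.univ_nonempty.image f))
  exact ⟨a, ha.symm⟩

lemma fmax_sub_const {A : Type*} [Fintype A] [Nonempty A] (f : A → ℝ) (c : ℝ) :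
    fmax (fun a => f a - c) = fmax f - c := by
  apply le_antisymm
  · rw [fmax_le_iff]
    intro a
    have := le_fmax f a
    linarith
  · obtain ⟨a, ha⟩ := exists_fmax f
    have := le_fmax (fun a => f a - c) a
    linarith

/-- If `Q` satisfies the Bellman optimality equation for reward `R`, then
`Q̂ s a = Q s a - lam * d s` satisfies the Bellman optimality equation for the
potential-based shaped reward `R' s a s' = R s a s' + lam * (γ * d s' - d s)`. -/
theorem shifted_Q_satisfies_shaped_bellman
    {S A : Type*} [Fintype S] [Nonempty S] [Fintype A] [Nonempty A]
    (T : S → A → S → ℝ) (hT0 : ∀ s a s', 0 ≤ T s a s')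
    (hT1 : ∀ s a, ∑ s', T s a s' = 1)
    (R : S → A → S → ℝ) (γ : ℝ) (d : S → ℝ) (lam : ℝ)
    (Q : S → A → ℝ)
    (hQ : ∀ s a, Q s a =
      ∑ s', T s a s' * (R s a s' + γ * fmax (fun a' => Q s' a'))) :
    ∀ s a, Q s a - lam * d s =
      ∑ s', T s a s' * ((R s a s' + lam * (γ * d s' - d s)) +
        γ * fmax (fun a' => Q s' a' - lam * d s')) := by
  intro s a
  have hmax : ∀ s' : S, fmax (fun a' => Q s' a' - lam * d s')
      = fmax (fun a' => Q s' a') - lam * d s' :=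
    fun s' => fmax_sub_const (fun a' => Q s' a') (lam * d s')
  calc Q s a - lam * d s
      = (∑ s', T s a s' * (R s a s' + γ * fmax (fun a' => Q s' a')))
        - lam * d s * ∑ s', T s a s' := by
        rw [← hQ s a, hT1]; ring
    _ = ∑ s', (T s a s' * (R s a s' + γ * fmax (fun a' => Q s' a'))
        - lam * d s * T s a s') := by
        rw [Finset.sum_sub_distrib, Finset.mul_sum]
    _ = ∑ s', T s a s' * ((R s a s' + lam * (γ * d s' - d s)) +
        γ * fmax (fun a' => Q s' a' - lam * d s')) := by
        apply Finset.sum_congr rfl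
        intro s' _
        rw [hmax s']
        ring
end
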